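/- Assume ν̄ᵢ > 0 for all i, U positive definite and W positive semidefinite. The sequence Q₀ = 0, Q_{k+1} = Π_c(Q_k) is monotone nondecreasing in the Loewner order: 0 ⪯ Q₁ ⪯ Q₂ ⪯ ⋯. If moreover there exist a real n×m matrix K̃ and a positive definite n×n matrix S̃ with φ(K̃, S̃) ≺ S̃, then Q_k converges (entrywise) to a positive semidefinite matrix S̄ satisfying S̄ = Π_c(S̄). -/

import Mathlib

open Matrix

/-- The scalar η_I = √(∏_{i∈I} ν̄ᵢ · ∏_{i∉I}(1−ν̄ᵢ)). -/
noncomputable def eta {m : ℕ} (ν : Fin m → ℝ) (I : Finset (Fin m)) : ℝ :=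
  Real.sqrt ((∏ i ∈ I, ν i) * (∏ i ∈ Iᶜ, (1 - ν i)))

/-- The m×m diagonal 0/1 matrix N_I whose i-th diagonal entry is 1 exactly when i ∈ I. -/
def NI {m : ℕ} (I : Finset (Fin m)) : Matrix (Fin m) (Fin m) ℝ :=
  Matrix.diagonal fun i => if i ∈ I then 1 else 0

/-- φ(K,X) = Σ_{I⊆{1,…,m}} η_I² (F_I(K) X F_I(K)ᵀ + V_I(K)), where
F_I(K) = Aᵀ + K N_I Bᵀ and V_I(K) = W + K N_I U N_I Kᵀ. -/
noncomputable def phi {m n : ℕ} (ν : Fin m → ℝ) (A W : Matrix (Fin n) (Fin n) ℝ)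
    (B : Matrix (Fin n) (Fin m) ℝ) (U : Matrix (Fin m) (Fin m) ℝ)
    (K : Matrix (Fin n) (Fin m) ℝ) (X : Matrix (Fin n) (Fin n) ℝ) :
    Matrix (Fin n) (Fin n) ℝ :=
  ∑ I : Finset (Fin m), (eta ν I) ^ 2 •
    ((Aᵀ + K * NI I * Bᵀ) * X * (Aᵀ + K * NI I * Bᵀ)ᵀ + (W + K * NI I * U * NI I * Kᵀ))

/-- M(X) = Σ_{I⊆{1,…,m}} η_I² N_I (U + Bᵀ X B) N_I. -/
noncomputable def Mop {m n : ℕ} (ν : Fin m → ℝ) (B : Matrix (Fin n) (Fin m) ℝ)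
    (U : Matrix (Fin m) (Fin m) ℝ) (X : Matrix (Fin n) (Fin n) ℝ) :
    Matrix (Fin m) (Fin m) ℝ :=
  ∑ I : Finset (Fin m), (eta ν I) ^ 2 • (NI I * (U + Bᵀ * X * B) * NI I)

/-- The modified algebraic Riccati operator
Π_c(X) = Aᵀ X A + W − Aᵀ X B N̄ M(X)⁻¹ N̄ Bᵀ X A, where N̄ = diag(ν̄₁,…,ν̄ₘ). -/
noncomputable def Pic {m n : ℕ} (ν : Fin m → ℝ) (A W : Matrix (Fin n) (Fin n) ℝ)
    (B : Matrix (Fin n) (Fin m) ℝ) (U : Matrix (Fin m) (Fin m) ℝ)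
    (X : Matrix (Fin n) (Fin n) ℝ) : Matrix (Fin n) (Fin n) ℝ :=
  Aᵀ * X * A + W -
    Aᵀ * X * B * Matrix.diagonal ν * (Mop ν B U X)⁻¹ * Matrix.diagonal ν * Bᵀ * X * A


/-! Completing the square in `K` gives, for `X ⪰ 0`,
`φ(K, X) = Π_c(X) + (K - K⋆(X)) M(X) (K - K⋆(X))ᵀ` with `K⋆(X) = -AᵀXBN̄M(X)⁻¹`,
so `Π_c(X)` is the least element of `{φ(K, X)}`. Since every `φ(K, ·)` is monotone, `Π_c` is
monotone on the positive semidefinite cone and the iterates from `0` increase; for the same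
reason a supersolution `φ(K̃, S̃) ⪯ S̃` bounds them by `S̃`. The increasing bounded sequence
converges, its limit is positive semidefinite, and `Π_c` is continuous there since `M` of the
limit is invertible, so the limit is a fixed point. -/
open scoped MatrixOrder

section Weights

variable {m : ℕ} {ν : Fin m → ℝ}

lemma eta_sq (hν : ∀ i, ν i ∈ Set.Icc (0 : ℝ) 1) (I : Finset (Fin m)) :
    eta ν I ^ 2 = (∏ i ∈ I, ν i) * ∏ i ∈ Iᶜ, (1 - ν i) :=
  Real.sq_sqrt <| mul_nonneg (Finset.prod_nonneg fun i _ => (hν i).1)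
    (Finset.prod_nonneg fun i _ => sub_nonneg.2 (hν i).2)

-- These sums over subsets are expansions of products `∏ i, (a i + b i)`.
lemma sum_eta_sq (hν : ∀ i, ν i ∈ Set.Icc (0 : ℝ) 1) :
    ∑ I : Finset (Fin m), eta ν I ^ 2 = 1 := by
  simp_rw [eta_sq hν]
  rw [← Fintype.prod_add]
  simp

lemma sum_eta_sq_mul_indicator (hν : ∀ i, ν i ∈ Set.Icc (0 : ℝ) 1) (i : Fin m) :
    ∑ I : Finset (Fin m), eta ν I ^ 2 * (if i ∈ I then 1 else 0) = ν i := by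
  have hterm (I : Finset (Fin m)) : eta ν I ^ 2 * (if i ∈ I then 1 else 0)
      = (∏ j ∈ I, ν j) * ∏ j ∈ Iᶜ, (if j = i then 0 else 1 - ν j) := by
    rw [eta_sq hν]
    by_cases hi : i ∈ I
    · rw [if_pos hi, mul_one]
      refine congrArg _ (Finset.prod_congr rfl fun j hj => ?_)
      rw [if_neg (by rintro rfl; exact Finset.mem_compl.1 hj hi)]
    · rw [if_neg hi, mul_zero, Finset.prod_eq_zero (Finset.mem_compl.2 hi) (by simp),
        mul_zero]
  simp_rw [hterm]
  rw [← Fintype.prod_add, Fintype.prod_eq_single i fun j hj => by simp [hj]]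
  simp

lemma sum_eta_sq_smul_NI (hν : ∀ i, ν i ∈ Set.Icc (0 : ℝ) 1) :
    ∑ I : Finset (Fin m), eta ν I ^ 2 • NI I = diagonal ν := by
  ext i j
  simp only [Matrix.sum_apply, Matrix.smul_apply, NI, diagonal_apply, smul_eq_mul]
  split_ifs with hij
  · subst hij; simpa using sum_eta_sq_mul_indicator hν i
  · simp

lemma eta_univ_pos (hν : ∀ i, 0 < ν i) : 0 < eta ν Finset.univ := by
  rw [eta, Finset.compl_univ, Finset.prod_empty, mul_one]
  exact Real.sqrt_pos.2 (Finset.prod_pos fun i _ => hν i)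

lemma NI_transpose (I : Finset (Fin m)) : (NI I)ᵀ = NI I :=
  diagonal_transpose _

lemma NI_univ : NI (Finset.univ : Finset (Fin m)) = 1 := by
  simp [NI]

end Weights

section LoewnerOrder

open Filter Topology

variable {ι : Type*} [Fintype ι]

lemma Matrix.isClosed_setOf_posSemidef : IsClosed {M : Matrix ι ι ℝ | M.PosSemidef} := by
  simp only [posSemidef_iff_dotProduct_mulVec, Set.ofPred_and, Set.ofPred_forall]
  exact (isClosed_eq (by fun_prop) continuous_id).inter
    (isClosed_iInter fun x => isClosed_le continuous_const (by fun_prop))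

lemma Matrix.dotProduct_mulVec_mono {X Y : Matrix ι ι ℝ} (h : X ≤ Y) (x : ι → ℝ) :
    x ⬝ᵥ X *ᵥ x ≤ x ⬝ᵥ Y *ᵥ x := by
  simpa [sub_mulVec, dotProduct_sub] using h.dotProduct_mulVec_nonneg x

variable [DecidableEq ι]

lemma Matrix.IsHermitian.apply_eq_polarization {M : Matrix ι ι ℝ} (hM : M.IsHermitian)
    (i j : ι) :
    M i j = ((Pi.single i 1 + Pi.single j 1) ⬝ᵥ M *ᵥ (Pi.single i 1 + Pi.single j 1)
      - Pi.single i 1 ⬝ᵥ M *ᵥ Pi.single i 1 - Pi.single j 1 ⬝ᵥ M *ᵥ Pi.single j 1) / 2 := by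
  have hji : M j i = M i j := by simpa using hM.apply i j
  simp only [mulVec_add, mulVec_single, MulOpposite.op_one, one_smul, dotProduct_add,
    add_dotProduct, single_dotProduct, col_apply, one_mul, hji]
  ring

-- Monotone convergence in the Loewner order: every quadratic form converges, and the entries
-- of a symmetric matrix are recovered from its quadratic form by polarization.
lemma Matrix.exists_tendsto_of_monotone_of_le {Q : ℕ → Matrix ι ι ℝ} (hQ : Monotone Q)
    (hherm : ∀ k, (Q k).IsHermitian) {S : Matrix ι ι ℝ} (hS : ∀ k, Q k ≤ S) :
    ∃ L, Tendsto Q atTop (𝓝 L) := by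
  have hquad (x : ι → ℝ) : ∃ l, Tendsto (fun k => x ⬝ᵥ Q k *ᵥ x) atTop (𝓝 l) :=
    ⟨_, tendsto_atTop_ciSup (fun k l hkl => dotProduct_mulVec_mono (hQ hkl) x)
      ⟨x ⬝ᵥ S *ᵥ x, by rintro _ ⟨k, rfl⟩; exact dotProduct_mulVec_mono (hS k) x⟩⟩
  choose q hq using hquad
  refine ⟨of fun i j => (q (Pi.single i 1 + Pi.single j 1) - q (Pi.single i 1)
    - q (Pi.single j 1)) / 2, tendsto_pi_nhds.2 fun i => tendsto_pi_nhds.2 fun j => ?_⟩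
  simp_rw [(hherm _).apply_eq_polarization i j]
  exact (((hq _).sub (hq _)).sub (hq _)).div_const 2

end LoewnerOrder

lemma Matrix.PosSemidef.mul_mul_transpose_same {ι κ R : Type*} [Fintype ι] [Fintype κ]
    [CommRing R] [PartialOrder R] [StarRing R] [TrivialStar R] {X : Matrix ι ι R}
    (hX : X.PosSemidef) (F : Matrix κ ι R) : (F * X * Fᵀ).PosSemidef := by
  simpa only [conjTranspose_eq_transpose_of_trivial] using hX.mul_mul_conjTranspose_same F

lemma Matrix.mul_mul_transpose_add_completeSquare {ι κ R : Type*} [Fintype κ] [DecidableEq κ]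
    [CommRing R] {M : Matrix κ κ R} (hM : Mᵀ = M) (hdet : IsUnit M.det) (K G : Matrix ι κ R) :
    K * M * Kᵀ + G * Kᵀ + K * Gᵀ =
      (K + G * M⁻¹) * M * (K + G * M⁻¹)ᵀ - G * M⁻¹ * Gᵀ := by
  have hMinv : (M⁻¹)ᵀ = M⁻¹ := by rw [transpose_nonsing_inv, hM]
  simp only [transpose_add, transpose_mul, hMinv, Matrix.add_mul, Matrix.mul_add,
    Matrix.mul_assoc, mul_nonsing_inv_cancel_left _ _ hdet,
    nonsing_inv_mul_cancel_left _ _ hdet]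
  abel

section Riccati

variable {m n : ℕ} {ν : Fin m → ℝ} {A W : Matrix (Fin n) (Fin n) ℝ}
  {B : Matrix (Fin n) (Fin m) ℝ} {U : Matrix (Fin m) (Fin m) ℝ}

lemma Mop_posDef (hν : ∀ i, 0 < ν i) (hU : U.PosDef) {X : Matrix (Fin n) (Fin n) ℝ}
    (hX : X.PosSemidef) : (Mop ν B U X).PosDef := by
  have hC : (U + Bᵀ * X * B).PosDef := by
    simpa only [transpose_transpose] using hU.add_posSemidef (hX.mul_mul_transpose_same Bᵀ)
  rw [Mop, ← Finset.add_sum_erase _ _ (Finset.mem_univ Finset.univ), NI_univ,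
    Matrix.one_mul, Matrix.mul_one]
  refine (hC.smul (pow_pos (eta_univ_pos hν) 2)).add_posSemidef
    (posSemidef_sum _ fun I _ => ?_)
  simpa only [NI_transpose] using (hC.posSemidef.mul_mul_transpose_same (NI I)).smul (sq_nonneg _)

lemma phi_posSemidef (hW : W.PosSemidef) (hU : U.PosSemidef) (K : Matrix (Fin n) (Fin m) ℝ)
    {X : Matrix (Fin n) (Fin n) ℝ} (hX : X.PosSemidef) : (phi ν A W B U K X).PosSemidef := by
  refine posSemidef_sum _ fun I _ => PosSemidef.smul ?_ (sq_nonneg _)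
  have hKU : K * NI I * U * NI I * Kᵀ = K * NI I * U * (K * NI I)ᵀ := by
    simp only [transpose_mul, NI_transpose, Matrix.mul_assoc]
  rw [hKU]
  exact (hX.mul_mul_transpose_same _).add (hW.add (hU.mul_mul_transpose_same _))

lemma phi_mono (K : Matrix (Fin n) (Fin m) ℝ) : Monotone (phi ν A W B U K) := by
  intro X Y hXY
  have hdiff : phi ν A W B U K Y - phi ν A W B U K X = ∑ I : Finset (Fin m), eta ν I ^ 2 •
      ((Aᵀ + K * NI I * Bᵀ) * (Y - X) * (Aᵀ + K * NI I * Bᵀ)ᵀ) := by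
    simp only [phi, ← Finset.sum_sub_distrib, ← smul_sub, Matrix.mul_sub, Matrix.sub_mul]
    congr! 2
    abel
  rw [le_iff, hdiff]
  exact posSemidef_sum _ fun I _ => (hXY.mul_mul_transpose_same _).smul (sq_nonneg _)

lemma phi_eq (hν : ∀ i, ν i ∈ Set.Icc (0 : ℝ) 1) (K : Matrix (Fin n) (Fin m) ℝ)
    (X : Matrix (Fin n) (Fin n) ℝ) :
    phi ν A W B U K X = Aᵀ * X * A + W + (K * Mop ν B U X * Kᵀ
      + Aᵀ * X * B * diagonal ν * Kᵀ + K * (diagonal ν * Bᵀ * X * A)) := by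
  have hterm (I : Finset (Fin m)) :
      (Aᵀ + K * NI I * Bᵀ) * X * (Aᵀ + K * NI I * Bᵀ)ᵀ + (W + K * NI I * U * NI I * Kᵀ)
      = (Aᵀ * X * A + W) + K * (NI I * (U + Bᵀ * X * B) * NI I) * Kᵀ
        + Aᵀ * X * B * NI I * Kᵀ + K * (NI I * Bᵀ * X * A) := by
    simp only [transpose_add, transpose_mul, transpose_transpose, NI_transpose,
      Matrix.add_mul, Matrix.mul_add, Matrix.mul_assoc]
    abel
  simp only [phi, hterm, smul_add, Finset.sum_add_distrib, ← Finset.sum_smul, sum_eta_sq hν,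
    one_smul, Mop, ← sum_eta_sq_smul_NI hν, Matrix.mul_sum, Matrix.sum_mul, Matrix.mul_smul,
    Matrix.smul_mul]
  abel

variable (ν A B U) in
noncomputable def optimalGain (X : Matrix (Fin n) (Fin n) ℝ) : Matrix (Fin n) (Fin m) ℝ :=
  -(Aᵀ * X * B * diagonal ν * (Mop ν B U X)⁻¹)

lemma phi_eq_Pic_add (hν : ∀ i, ν i ∈ Set.Ioc (0 : ℝ) 1) (hU : U.PosDef)
    (K : Matrix (Fin n) (Fin m) ℝ) {X : Matrix (Fin n) (Fin n) ℝ} (hX : X.PosSemidef) :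
    phi ν A W B U K X = Pic ν A W B U X + (K - optimalGain ν A B U X) * Mop ν B U X *
      (K - optimalGain ν A B U X)ᵀ := by
  have hM := Mop_posDef (fun i => (hν i).1) hU hX (B := B)
  have hMt : (Mop ν B U X)ᵀ = Mop ν B U X := by
    simpa only [conjTranspose_eq_transpose_of_trivial] using hM.isHermitian.eq
  have hXt : Xᵀ = X := by
    simpa only [conjTranspose_eq_transpose_of_trivial] using hX.isHermitian.eq
  have hGt : (Aᵀ * X * B * diagonal ν)ᵀ = diagonal ν * Bᵀ * X * A := by
    simp only [transpose_mul, diagonal_transpose, transpose_transpose, hXt, Matrix.mul_assoc]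
  rw [phi_eq (fun i => Set.Ioc_subset_Icc_self (hν i)), ← hGt,
    mul_mul_transpose_add_completeSquare hMt ((isUnit_iff_isUnit_det _).1 hM.isUnit),
    optimalGain, sub_neg_eq_add, Pic, hGt]
  simp only [Matrix.mul_assoc]
  abel

lemma Pic_eq_phi_optimalGain (hν : ∀ i, ν i ∈ Set.Ioc (0 : ℝ) 1) (hU : U.PosDef)
    {X : Matrix (Fin n) (Fin n) ℝ} (hX : X.PosSemidef) :
    Pic ν A W B U X = phi ν A W B U (optimalGain ν A B U X) X := by
  simp [phi_eq_Pic_add hν hU _ hX]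

lemma Pic_le_phi (hν : ∀ i, ν i ∈ Set.Ioc (0 : ℝ) 1) (hU : U.PosDef)
    (K : Matrix (Fin n) (Fin m) ℝ) {X : Matrix (Fin n) (Fin n) ℝ} (hX : X.PosSemidef) :
    Pic ν A W B U X ≤ phi ν A W B U K X := by
  rw [le_iff, phi_eq_Pic_add hν hU K hX, add_sub_cancel_left]
  exact (Mop_posDef (fun i => (hν i).1) hU hX).posSemidef.mul_mul_transpose_same _

lemma Pic_posSemidef (hν : ∀ i, ν i ∈ Set.Ioc (0 : ℝ) 1) (hW : W.PosSemidef) (hU : U.PosDef)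
    {X : Matrix (Fin n) (Fin n) ℝ} (hX : X.PosSemidef) : (Pic ν A W B U X).PosSemidef := by
  rw [Pic_eq_phi_optimalGain hν hU hX]
  exact phi_posSemidef hW hU.posSemidef _ hX

lemma Pic_mono (hν : ∀ i, ν i ∈ Set.Ioc (0 : ℝ) 1) (hU : U.PosDef)
    {X Y : Matrix (Fin n) (Fin n) ℝ} (hX : X.PosSemidef) (hY : Y.PosSemidef) (hXY : X ≤ Y) :
    Pic ν A W B U X ≤ Pic ν A W B U Y :=
  calc Pic ν A W B U X ≤ phi ν A W B U (optimalGain ν A B U Y) X := Pic_le_phi hν hU _ hX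
    _ ≤ phi ν A W B U (optimalGain ν A B U Y) Y := phi_mono _ hXY
    _ = Pic ν A W B U Y := (Pic_eq_phi_optimalGain hν hU hY).symm

lemma continuous_Mop : Continuous fun X : Matrix (Fin n) (Fin n) ℝ => Mop ν B U X := by
  unfold Mop
  fun_prop

lemma continuousAt_Pic (hν : ∀ i, 0 < ν i) (hU : U.PosDef) {X : Matrix (Fin n) (Fin n) ℝ}
    (hX : X.PosSemidef) : ContinuousAt (Pic ν A W B U) X := by
  have hdet : (Mop ν B U X).det ≠ 0 := (Mop_posDef hν hU hX).det_pos.ne'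
  have hinv : ContinuousAt (fun Y => (Mop ν B U Y)⁻¹) X :=
    (continuousAt_matrix_inv _ (by rw [Ring.inverse_eq_inv']; exact continuousAt_inv₀ hdet)).comp
      continuous_Mop.continuousAt
  unfold Pic
  fun_prop

end Riccati

section Iterates

variable {m n : ℕ} {ν : Fin m → ℝ} {A W : Matrix (Fin n) (Fin n) ℝ}
  {B : Matrix (Fin n) (Fin m) ℝ} {U : Matrix (Fin m) (Fin m) ℝ}
  (hν : ∀ i, ν i ∈ Set.Ioc (0 : ℝ) 1) (hW : W.PosSemidef) (hU : U.PosDef)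
include hν hW hU

lemma Pic_iterate_posSemidef (k : ℕ) : ((Pic ν A W B U)^[k] 0).PosSemidef := by
  induction k with
  | zero => exact PosSemidef.zero
  | succ k ih =>
    rw [Function.iterate_succ_apply']
    exact Pic_posSemidef hν hW hU ih

lemma monotone_Pic_iterate : Monotone fun k => (Pic ν A W B U)^[k] 0 := by
  refine monotone_nat_of_le_succ fun k => ?_
  induction k with
  | zero => simpa [le_iff] using Pic_posSemidef hν hW hU PosSemidef.zero
  | succ k ih =>
    rw [Function.iterate_succ_apply' _ (k + 1)]
    nth_rewrite 1 [Function.iterate_succ_apply']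
    exact Pic_mono hν hU (Pic_iterate_posSemidef hν hW hU k)
      (Pic_iterate_posSemidef hν hW hU (k + 1)) ih

lemma Pic_iterate_le {K : Matrix (Fin n) (Fin m) ℝ} {S : Matrix (Fin n) (Fin n) ℝ}
    (hS : S.PosSemidef) (hphi : phi ν A W B U K S ≤ S) (k : ℕ) :
    (Pic ν A W B U)^[k] 0 ≤ S := by
  induction k with
  | zero => simpa [le_iff] using hS
  | succ k ih =>
    have hQ := Pic_iterate_posSemidef (A := A) (B := B) hν hW hU k
    calc (Pic ν A W B U)^[k + 1] 0 = Pic ν A W B U ((Pic ν A W B U)^[k] 0) :=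
          Function.iterate_succ_apply' _ _ _
      _ ≤ phi ν A W B U K ((Pic ν A W B U)^[k] 0) := Pic_le_phi hν hU K hQ
      _ ≤ phi ν A W B U K S := phi_mono K ih
      _ ≤ S := hphi

end Iterates

theorem Pic_iterates_from_zero_general (m n : ℕ) (ν : Fin m → ℝ)
    (hν : ∀ i, ν i ∈ Set.Ioc (0 : ℝ) 1)
    (A W : Matrix (Fin n) (Fin n) ℝ) (B : Matrix (Fin n) (Fin m) ℝ)
    (U : Matrix (Fin m) (Fin m) ℝ) (hW : W.PosSemidef) (hU : U.PosDef) :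
    (∀ k : ℕ,
      ((fun X => Pic ν A W B U X)^[k + 1] 0 -
        (fun X => Pic ν A W B U X)^[k] 0).PosSemidef) ∧
    ((∃ (Ktilde : Matrix (Fin n) (Fin m) ℝ) (Stilde : Matrix (Fin n) (Fin n) ℝ),
        Stilde.PosDef ∧ (Stilde - phi ν A W B U Ktilde Stilde).PosDef) →
      ∃ Sbar : Matrix (Fin n) (Fin n) ℝ, Sbar.PosSemidef ∧
        Pic ν A W B U Sbar = Sbar ∧
        Filter.Tendsto (fun k : ℕ => (fun X => Pic ν A W B U X)^[k] 0)
          Filter.atTop (nhds Sbar)) := by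
  have hQ := Pic_iterate_posSemidef (A := A) (B := B) hν hW hU
  have hmono := monotone_Pic_iterate (A := A) (B := B) hν hW hU
  refine ⟨fun k => hmono k.le_succ, ?_⟩
  rintro ⟨K, S, hS, hphiS⟩
  obtain ⟨Sbar, hlim⟩ := exists_tendsto_of_monotone_of_le hmono (fun k => (hQ k).isHermitian)
    (Pic_iterate_le hν hW hU hS.posSemidef hphiS.posSemidef)
  have hSbar : Sbar.PosSemidef := isClosed_setOf_posSemidef.mem_of_tendsto hlim (.of_forall hQ)
  exact ⟨Sbar, hSbar,
    isFixedPt_of_tendsto_iterate hlim (continuousAt_Pic (fun i => (hν i).1) hU hSbar), hlim⟩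

/-- the sequence Q₀ = 0, Q_{k+1} = Π_c(Q_k) is monotone
nondecreasing in the Loewner order (so 0 ⪯ Q₁ ⪯ Q₂ ⪯ ⋯); and if there exist K̃
and S̃ ≻ 0 with φ(K̃, S̃) ≺ S̃, then Q_k converges entrywise to a positive
semidefinite S̄ with S̄ = Π_c(S̄). -/
theorem Pic_iterates_from_zero (m n : ℕ) (hm : 0 < m) (hn : 0 < n) (ν : Fin m → ℝ)
    (hν : ∀ i, ν i ∈ Set.Ioc (0 : ℝ) 1)
    (A W : Matrix (Fin n) (Fin n) ℝ) (B : Matrix (Fin n) (Fin m) ℝ)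
    (U : Matrix (Fin m) (Fin m) ℝ) (hW : W.PosSemidef) (hU : U.PosDef) :
    (∀ k : ℕ,
      ((fun X => Pic ν A W B U X)^[k + 1] 0 -
        (fun X => Pic ν A W B U X)^[k] 0).PosSemidef) ∧
    ((∃ (Ktilde : Matrix (Fin n) (Fin m) ℝ) (Stilde : Matrix (Fin n) (Fin n) ℝ),
        Stilde.PosDef ∧ (Stilde - phi ν A W B U Ktilde Stilde).PosDef) →
      ∃ Sbar : Matrix (Fin n) (Fin n) ℝ, Sbar.PosSemidef ∧
        Pic ν A W B U Sbar = Sbar ∧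
        Filter.Tendsto (fun k : ℕ => (fun X => Pic ν A W B U X)^[k] 0)
          Filter.atTop (nhds Sbar)) :=
  Pic_iterates_from_zero_general m n ν hν A W B U hW hU
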